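/- For every n ≥ 0 and ξ ∈ ℝ, the characteristic function E_n(ξ) = Σ_{x∈ℤ} q_n(ψ;x) e^{iξx} satisfies E_n(ξ) = |ψ₁|²[P_n¹(ξ) + P_n²(ξ)] + |ψ₂|²[Q_n¹(ξ) + Q_n²(ξ)] + 2 Re(ψ₁ ψ̄₂)[R_n¹(ξ) + R_n²(ξ)]. -/

import Mathlib

/-- The Laurent polynomial `s(z + z⁻¹)/2`. -/
noncomputable def zArg (s : ℝ) : LaurentPolynomial ℂ :=
  ((s : ℂ) / 2) • (LaurentPolynomial.T 1 + LaurentPolynomial.T (-1))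

/-- The Laurent polynomial `Tₙ(s(z + z⁻¹)/2)` (Chebyshev polynomial of the first kind). -/
noncomputable def chebTz (s : ℝ) (n : ℤ) : LaurentPolynomial ℂ :=
  Polynomial.aeval (zArg s) (Polynomial.Chebyshev.T ℂ n)

/-- The Laurent polynomial `Uₙ(s(z + z⁻¹)/2)` (Chebyshev polynomial of the second kind). -/
noncomputable def chebUz (s : ℝ) (n : ℤ) : LaurentPolynomial ℂ :=
  Polynomial.aeval (zArg s) (Polynomial.Chebyshev.U ℂ n)

/-- `p_n¹(z) = Tₙ(s(z+z⁻¹)/2) + (s/2)(z−z⁻¹) U_{n−1}(s(z+z⁻¹)/2)`. -/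
noncomputable def pn1 (s : ℝ) (n : ℕ) : LaurentPolynomial ℂ :=
  chebTz s (n : ℤ) +
    ((s : ℂ) / 2) • ((LaurentPolynomial.T 1 - LaurentPolynomial.T (-1)) * chebUz s ((n : ℤ) - 1))

/-- `p_n²(z) = t z U_{n−1}(s(z+z⁻¹)/2)`. -/
noncomputable def pn2 (s t : ℝ) (n : ℕ) : LaurentPolynomial ℂ :=
  (t : ℂ) • (LaurentPolynomial.T 1 * chebUz s ((n : ℤ) - 1))

/-- `q_n¹(z) = −t z⁻¹ U_{n−1}(s(z+z⁻¹)/2)`. -/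
noncomputable def qn1 (s t : ℝ) (n : ℕ) : LaurentPolynomial ℂ :=
  -((t : ℂ) • (LaurentPolynomial.T (-1) * chebUz s ((n : ℤ) - 1)))

/-- `q_n²(z) = Tₙ(s(z+z⁻¹)/2) − (s/2)(z−z⁻¹) U_{n−1}(s(z+z⁻¹)/2)`. -/
noncomputable def qn2 (s : ℝ) (n : ℕ) : LaurentPolynomial ℂ :=
  chebTz s (n : ℤ) -
    ((s : ℂ) / 2) • ((LaurentPolynomial.T 1 - LaurentPolynomial.T (-1)) * chebUz s ((n : ℤ) - 1))

/-- `Σ_x c_x(p)² e^{iξx}`. -/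
noncomputable def sqSum (p : LaurentPolynomial ℂ) (ξ : ℝ) : ℂ :=
  ∑' x : ℤ, (p.coeff x) ^ 2 * Complex.exp (Complex.I * ξ * x)

/-- `Σ_x c_x(p) c_x(q) e^{iξx}`. -/
noncomputable def prodSum (p q : LaurentPolynomial ℂ) (ξ : ℝ) : ℂ :=
  ∑' x : ℤ, p.coeff x * q.coeff x * Complex.exp (Complex.I * ξ * x)

/-!
Since `σ` commutes with `V` and anticommutes with `W`, the operator `T` acts as `V` on `π₊H` and
as `V*` on `π₋H`, so `e₁ˣ = Vˣ e` and `e₂ˣ = V⁻ˣ ε e`. These vectors are orthonormal by (QWR) and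
the `σ`-grading, and `U = sV + tW` shifts them, so the amplitudes `⟨e₁ˣ, UⁿΨ⟩`, `⟨e₂ˣ, UⁿΨ⟩`
satisfy a two-component recursion in `n`. By the Chebyshev recursions the coefficients of
`(p_n¹, p_n²)` and of `(q_n¹, q_n²)` satisfy the same recursion, so by linearity and uniqueness the
amplitudes are `ψ₁ c_x(p_nⁱ) + ψ₂ c_x(q_nⁱ)`. These coefficients are real, and expanding `|·|²`
in the finite sums gives the formula.
-/

open ContinuousLinearMap LaurentPolynomial

namespace LaurentPolynomial

variable {R : Type*} [Semiring R]

lemma coeff_T_mul (n x : ℤ) (f : R[T;T⁻¹]) : (T n * f).coeff x = f.coeff (x - n) := by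
  rw [T, AddMonoidAlgebra.coeff_single_mul_apply, one_mul, neg_add_eq_sub]

lemma coeff_one_eq_ite (x : ℤ) : (1 : R[T;T⁻¹]).coeff x = if x = 0 then 1 else 0 := by
  rw [← map_one C, C_apply]

lemma T_one_mul_T_neg_one : (T 1 * T (-1) : R[T;T⁻¹]) = 1 := by
  rw [← T_add, add_neg_cancel, T_zero]

end LaurentPolynomial

lemma chebTz_add_one (s : ℝ) (n : ℤ) :
    chebTz s (n + 1) = zArg s * chebTz s n - (1 - zArg s ^ 2) * chebUz s (n - 1) := by
  have h := Polynomial.Chebyshev.T_eq_X_mul_T_sub_pol_U ℂ (n - 1)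
  rw [sub_add_cancel, show n - 1 + 2 = n + 1 by ring] at h
  simp only [chebTz, chebUz, h, map_sub, map_mul, map_one, map_pow, Polynomial.aeval_X]

lemma chebUz_eq (s : ℝ) (n : ℤ) : chebUz s n = zArg s * chebUz s (n - 1) + chebTz s n := by
  have h := Polynomial.Chebyshev.U_eq_X_mul_U_add_T ℂ (n - 1)
  rw [sub_add_cancel] at h
  simp only [chebTz, chebUz, h, map_add, map_mul, Polynomial.aeval_X]

lemma C_half_mul_two (s : ℝ) : C ((s : ℂ) / 2) * 2 = (C (s : ℂ) : LaurentPolynomial ℂ) := by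
  rw [← map_ofNat C 2, ← map_mul, div_mul_cancel₀ _ two_ne_zero]

lemma C_sq_add_C_sq {s t : ℝ} (hst : s ^ 2 + t ^ 2 = 1) :
    (C (s : ℂ) ^ 2 + C (t : ℂ) ^ 2 : LaurentPolynomial ℂ) = 1 := by
  rw [← map_pow, ← map_pow, ← map_add, ← map_one C]
  exact_mod_cast congrArg (fun r : ℝ => C (r : ℂ)) hst

lemma pn_succ {s t : ℝ} (hst : s ^ 2 + t ^ 2 = 1) (n : ℕ) :
    pn1 s (n + 1) = (s : ℂ) • (T 1 * pn1 s n) - (t : ℂ) • (T (-1) * pn2 s t n) ∧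
      pn2 s t (n + 1) = (t : ℂ) • (T 1 * pn1 s n) + (s : ℂ) • (T (-1) * pn2 s t n) := by
  have hst' := C_sq_add_C_sq hst
  simp only [pn1, pn2, Nat.cast_succ, add_sub_cancel_right, chebTz_add_one, chebUz_eq s n, zArg,
    smul_eq_C_mul, ← C_half_mul_two] at hst' ⊢
  constructor
  · linear_combination (T 1 * T (-1) * chebUz s (n - 1)) * hst' +
      chebUz s (n - 1) * T_one_mul_T_neg_one (R := ℂ)
  · ring

lemma qn_succ {s t : ℝ} (hst : s ^ 2 + t ^ 2 = 1) (n : ℕ) :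
    qn1 s t (n + 1) = (s : ℂ) • (T 1 * qn1 s t n) - (t : ℂ) • (T (-1) * qn2 s n) ∧
      qn2 s (n + 1) = (t : ℂ) • (T 1 * qn1 s t n) + (s : ℂ) • (T (-1) * qn2 s n) := by
  have hst' := C_sq_add_C_sq hst
  simp only [qn1, qn2, Nat.cast_succ, add_sub_cancel_right, chebTz_add_one, chebUz_eq s n, zArg,
    smul_eq_C_mul, ← C_half_mul_two] at hst' ⊢
  constructor
  · ring
  · linear_combination (T 1 * T (-1) * chebUz s (n - 1)) * hst' +
      chebUz s (n - 1) * T_one_mul_T_neg_one (R := ℂ)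

lemma pn_zero (s t : ℝ) : pn1 s 0 = 1 ∧ pn2 s t 0 = 0 := by
  simp [pn1, pn2, chebTz, chebUz, Polynomial.Chebyshev.U_neg_one]

lemma qn_zero (s t : ℝ) : qn1 s t 0 = 0 ∧ qn2 s 0 = 1 := by
  simp [qn1, qn2, chebTz, chebUz, Polynomial.Chebyshev.U_neg_one]

/-- The recursion obeyed both by the amplitudes `⟨e₁ˣ, UⁿΨ⟩`, `⟨e₂ˣ, UⁿΨ⟩` and by the
coefficients of `(p_n¹, p_n²)` and of `(q_n¹, q_n²)`. -/
def IsWalk (s t : ℝ) (a b : ℕ → ℤ → ℂ) : Prop :=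
  ∀ n x, a (n + 1) x = s * a n (x - 1) - t * b n (x + 1) ∧
    b (n + 1) x = t * a n (x - 1) + s * b n (x + 1)

namespace IsWalk

variable {s t : ℝ} {a b a' b' : ℕ → ℤ → ℂ}

lemma eq_of_zero (h : IsWalk s t a b) (h' : IsWalk s t a' b') (ha : a 0 = a' 0)
    (hb : b 0 = b' 0) : a = a' ∧ b = b' := by
  have key : ∀ n, a n = a' n ∧ b n = b' n := by
    intro n
    induction n with
    | zero => exact ⟨ha, hb⟩
    | succ n ih =>
      refine ⟨funext fun x => ?_, funext fun x => ?_⟩ <;>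
        simp only [h n x, h' n x, ih.1, ih.2]
  exact ⟨funext fun n => (key n).1, funext fun n => (key n).2⟩

lemma linearCombination (h : IsWalk s t a b) (h' : IsWalk s t a' b') (c c' : ℂ) :
    IsWalk s t (fun n x => c * a n x + c' * a' n x) (fun n x => c * b n x + c' * b' n x) := by
  intro n x
  constructor <;> simp only [h n x, h' n x] <;> ring

lemma conj (h : IsWalk s t a b) :
    IsWalk s t (fun n x => starRingEnd ℂ (a n x)) (fun n x => starRingEnd ℂ (b n x)) := by
  intro n x
  simp only [h n x, map_sub, map_add, map_mul, Complex.conj_ofReal, and_self]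

lemma conj_eq_self (h : IsWalk s t a b) (ha : ∀ x, starRingEnd ℂ (a 0 x) = a 0 x)
    (hb : ∀ x, starRingEnd ℂ (b 0 x) = b 0 x) :
    (∀ n x, starRingEnd ℂ (a n x) = a n x) ∧ ∀ n x, starRingEnd ℂ (b n x) = b n x := by
  obtain ⟨ha', hb'⟩ := h.conj.eq_of_zero h (funext ha) (funext hb)
  exact ⟨fun n x => congrFun (congrFun ha' n) x, fun n x => congrFun (congrFun hb' n) x⟩

end IsWalk

lemma isWalk_coeff {s t : ℝ} {f g : ℕ → LaurentPolynomial ℂ}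
    (h : ∀ n, f (n + 1) = (s : ℂ) • (T 1 * f n) - (t : ℂ) • (T (-1) * g n) ∧
      g (n + 1) = (t : ℂ) • (T 1 * f n) + (s : ℂ) • (T (-1) * g n)) :
    IsWalk s t (fun n => (f n).coeff) (fun n => (g n).coeff) := by
  intro n x
  simp only [(h n).1, (h n).2, AddMonoidAlgebra.coeff_sub, AddMonoidAlgebra.coeff_add,
    Finsupp.coe_sub, Finsupp.coe_add, Pi.sub_apply, Pi.add_apply,
    AddMonoidAlgebra.coeff_smul_apply, coeff_T_mul, smul_eq_mul, sub_neg_eq_add, and_self]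

lemma isWalk_coeff_pn {s t : ℝ} (hst : s ^ 2 + t ^ 2 = 1) :
    IsWalk s t (fun n => (pn1 s n).coeff) (fun n => (pn2 s t n).coeff) :=
  isWalk_coeff (pn_succ hst)

lemma isWalk_coeff_qn {s t : ℝ} (hst : s ^ 2 + t ^ 2 = 1) :
    IsWalk s t (fun n => (qn1 s t n).coeff) (fun n => (qn2 s n).coeff) :=
  isWalk_coeff (qn_succ hst)

lemma conj_coeff_pn {s t : ℝ} (hst : s ^ 2 + t ^ 2 = 1) (n : ℕ) (x : ℤ) :
    starRingEnd ℂ ((pn1 s n).coeff x) = (pn1 s n).coeff x ∧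
      starRingEnd ℂ ((pn2 s t n).coeff x) = (pn2 s t n).coeff x := by
  obtain ⟨h₁, h₂⟩ := (isWalk_coeff_pn hst).conj_eq_self
    (fun x => by simp [(pn_zero s t).1, coeff_one_eq_ite, apply_ite])
    (fun x => by simp [(pn_zero s t).2])
  exact ⟨h₁ n x, h₂ n x⟩

lemma conj_coeff_qn {s t : ℝ} (hst : s ^ 2 + t ^ 2 = 1) (n : ℕ) (x : ℤ) :
    starRingEnd ℂ ((qn1 s t n).coeff x) = (qn1 s t n).coeff x ∧
      starRingEnd ℂ ((qn2 s n).coeff x) = (qn2 s n).coeff x := by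
  obtain ⟨h₁, h₂⟩ := (isWalk_coeff_qn hst).conj_eq_self
    (fun x => by simp [(qn_zero s t).1])
    (fun x => by simp [(qn_zero s t).2, coeff_one_eq_ite, apply_ite])
  exact ⟨h₁ n x, h₂ n x⟩

lemma IsWalk.eq_coeff {s t : ℝ} (hst : s ^ 2 + t ^ 2 = 1) {a b : ℕ → ℤ → ℂ}
    (h : IsWalk s t a b) {ψ₁ ψ₂ : ℂ} (ha : ∀ x, a 0 x = if x = 0 then ψ₁ else 0)
    (hb : ∀ x, b 0 x = if x = 0 then ψ₂ else 0) (n : ℕ) (x : ℤ) :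
    a n x = ψ₁ * (pn1 s n).coeff x + ψ₂ * (qn1 s t n).coeff x ∧
      b n x = ψ₁ * (pn2 s t n).coeff x + ψ₂ * (qn2 s n).coeff x := by
  have hpq := (isWalk_coeff_pn hst).linearCombination (isWalk_coeff_qn hst) ψ₁ ψ₂
  obtain ⟨h₁, h₂⟩ := h.eq_of_zero hpq
    (funext fun x => by simp [ha, (pn_zero s t).1, (qn_zero s t).1, coeff_one_eq_ite])
    (funext fun x => by simp [hb, (pn_zero s t).2, (qn_zero s t).2, coeff_one_eq_ite])
  exact ⟨congrFun (congrFun h₁ n) x, congrFun (congrFun h₂ n) x⟩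

lemma norm_sq_add_norm_sq_eq {ψ₁ ψ₂ a b c d : ℂ} (ha : starRingEnd ℂ a = a)
    (hb : starRingEnd ℂ b = b) (hc : starRingEnd ℂ c = c) (hd : starRingEnd ℂ d = d) :
    ((‖ψ₁ * a + ψ₂ * c‖ ^ 2 + ‖ψ₁ * b + ψ₂ * d‖ ^ 2 : ℝ) : ℂ) =
      ((‖ψ₁‖ ^ 2 : ℝ) : ℂ) * (a ^ 2 + b ^ 2) + ((‖ψ₂‖ ^ 2 : ℝ) : ℂ) * (c ^ 2 + d ^ 2) +
        ((2 * (ψ₁ * starRingEnd ℂ ψ₂).re : ℝ) : ℂ) * (a * c + b * d) := by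
  have hnorm (z : ℂ) : ((‖z‖ ^ 2 : ℝ) : ℂ) = z * starRingEnd ℂ z := by
    rw [Complex.mul_conj, Complex.normSq_eq_norm_sq]
  have hre : ((2 * (ψ₁ * starRingEnd ℂ ψ₂).re : ℝ) : ℂ) =
      ψ₁ * starRingEnd ℂ ψ₂ + starRingEnd ℂ ψ₁ * ψ₂ := by
    rw [← Complex.add_conj, map_mul, Complex.conj_conj]
  simp only [Complex.ofReal_add, hnorm, hre, map_add, map_mul, ha, hb, hc, hd]
  ring

lemma hasSum_prodSum (p q : LaurentPolynomial ℂ) (ξ : ℝ) :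
    HasSum (fun x : ℤ => p.coeff x * q.coeff x * Complex.exp (Complex.I * ξ * x))
      (prodSum p q ξ) :=
  (summable_of_ne_finset_zero (s := p.coeff.support) fun x hx => by
    rw [Finsupp.notMem_support_iff.mp hx, zero_mul, zero_mul]).hasSum

lemma hasSum_sqSum (p : LaurentPolynomial ℂ) (ξ : ℝ) :
    HasSum (fun x : ℤ => p.coeff x ^ 2 * Complex.exp (Complex.I * ξ * x)) (sqSum p ξ) := by
  have h : sqSum p ξ = prodSum p p ξ := by simp only [sqSum, prodSum, sq]
  simpa only [h, sq] using hasSum_prodSum p p ξ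

lemma tsum_norm_sq_mul_exp (ψ₁ ψ₂ : ℂ) {p₁ p₂ q₁ q₂ : LaurentPolynomial ℂ}
    (hp₁ : ∀ x, starRingEnd ℂ (p₁.coeff x) = p₁.coeff x)
    (hp₂ : ∀ x, starRingEnd ℂ (p₂.coeff x) = p₂.coeff x)
    (hq₁ : ∀ x, starRingEnd ℂ (q₁.coeff x) = q₁.coeff x)
    (hq₂ : ∀ x, starRingEnd ℂ (q₂.coeff x) = q₂.coeff x) (ξ : ℝ) :
    ∑' x : ℤ, ((‖ψ₁ * p₁.coeff x + ψ₂ * q₁.coeff x‖ ^ 2 +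
        ‖ψ₁ * p₂.coeff x + ψ₂ * q₂.coeff x‖ ^ 2 : ℝ) : ℂ) * Complex.exp (Complex.I * ξ * x) =
      ((‖ψ₁‖ ^ 2 : ℝ) : ℂ) * (sqSum p₁ ξ + sqSum p₂ ξ) +
        ((‖ψ₂‖ ^ 2 : ℝ) : ℂ) * (sqSum q₁ ξ + sqSum q₂ ξ) +
        ((2 * (ψ₁ * starRingEnd ℂ ψ₂).re : ℝ) : ℂ) * (prodSum p₁ q₁ ξ + prodSum p₂ q₂ ξ) := by
  rw [← (((((hasSum_sqSum p₁ ξ).add (hasSum_sqSum p₂ ξ)).mul_left _).add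
    (((hasSum_sqSum q₁ ξ).add (hasSum_sqSum q₂ ξ)).mul_left _)).add
    (((hasSum_prodSum p₁ q₁ ξ).add (hasSum_prodSum p₂ q₂ ξ)).mul_left _)).tsum_eq]
  refine tsum_congr fun x => ?_
  rw [norm_sq_add_norm_sq_eq (hp₁ x) (hp₂ x) (hq₁ x) (hq₂ x)]
  ring

lemma zpow_smul_eq_zpow_smul {G α : Type*} [Group G] [MulAction G α] {a b : G} {S : Set α}
    (hS : ∀ u ∈ S, b • u ∈ S ∧ b⁻¹ • u ∈ S) (hab : ∀ u ∈ S, a • u = b • u) (n : ℤ) :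
    ∀ u ∈ S, a ^ n • u = b ^ n • u := by
  have hinv : ∀ u ∈ S, a⁻¹ • u = b⁻¹ • u := fun u hu => by
    rw [inv_smul_eq_iff, hab _ (hS u hu).2, smul_inv_smul]
  induction n using Int.induction_on with
  | zero => simp
  | succ k ih =>
    intro u hu
    rw [zpow_add_one, zpow_add_one, mul_smul, mul_smul, hab u hu, ih _ (hS u hu).1]
  | pred k ih =>
    intro u hu
    rw [zpow_sub_one, zpow_sub_one, mul_smul, mul_smul, hinv u hu, ih _ (hS u hu).2]

section ContinuousLinearMap

variable {R M : Type*} [Semiring R] [TopologicalSpace M] [AddCommGroup M] [Module R M]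

lemma Commute.apply_comm {σ f : M →L[R] M} (h : Commute σ f) (u : M) : σ (f u) = f (σ u) :=
  congr($(h.eq) u)

lemma Commute.apply_eq_smul {σ f : M →L[R] M} (h : Commute σ f) {c : R} {u : M}
    (hu : σ u = c • u) : σ (f u) = c • f u := by
  rw [h.apply_comm, hu, map_smul]

variable [ContinuousAdd M] {V : (M →L[R] M)ˣ} {W : M →L[R] M} {e : M} {e1 e2 : ℤ → M}

lemma apply_units_zpow_smul_of_commute {σ : M →L[R] M} (hσV : Commute σ V) (n : ℤ) (u : M) :
    σ (V ^ n • u) = V ^ n • σ u :=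
  (hσV.units_zpow_right n).apply_comm u

lemma apply_units_zpow_smul (hVW : (V : M →L[R] M) * W = W * ↑V⁻¹) (n : ℤ) (u : M) :
    W (V ^ n • u) = V ^ (-n) • W u := by
  have h : SemiconjBy W ↑V⁻¹ ↑V := hVW.symm
  have := h.units_zpow_right (-n)
  rw [inv_zpow', neg_neg] at this
  exact congr($(this.eq) u)

lemma units_zpow_smul_eq_of_eigen {σ : M →L[R] M} {A B : (M →L[R] M)ˣ} {c : R}
    (hσB : Commute σ B) (hAB : ∀ u, σ u = c • u → A • u = B • u) {e : M} (he : σ e = c • e)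
    (n : ℤ) : A ^ n • e = B ^ n • e :=
  zpow_smul_eq_zpow_smul (a := A) (b := B) (S := {u | σ u = c • u})
    (fun _ hu => ⟨hσB.apply_eq_smul hu, hσB.units_inv_right.apply_eq_smul hu⟩) hAB n e he

lemma apply_e1 (hVW : (V : M →L[R] M) * W = W * ↑V⁻¹) (he1 : ∀ x, e1 x = V ^ x • e)
    (he2 : ∀ x, e2 x = V ^ (-x) • V • W e) (x : ℤ) : W (e1 x) = e2 (x + 1) := by
  rw [he1, he2, apply_units_zpow_smul hVW, smul_smul]
  group

lemma apply_e2 (hVW : (V : M →L[R] M) * W = W * ↑V⁻¹) (hWe : W (W e) = -e)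
    (he1 : ∀ x, e1 x = V ^ x • e) (he2 : ∀ x, e2 x = V ^ (-x) • V • W e) (x : ℤ) :
    W (e2 x) = -e1 (x - 1) := by
  have hWV (u : M) : W (V • u) = V⁻¹ • W u := by simpa using apply_units_zpow_smul hVW 1 u
  rw [he1, he2, apply_units_zpow_smul hVW, hWV, hWe, smul_neg, smul_neg, smul_smul]
  group

end ContinuousLinearMap

lemma eq_neg_of_mul_eq_one_of_mul_self_eq_neg_one {R : Type*} [Ring R] {a w : R} (h : a * w = 1)
    (hw : w * w = -1) : a = -w :=
  calc a = a * -(w * w) := by rw [hw, neg_neg, mul_one]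
    _ = -w := by rw [mul_neg, ← mul_assoc, h, one_mul]

lemma eq_of_inv_two_smul_add_eq {K E : Type*} [DivisionRing K] [NeZero (2 : K)] [AddCommGroup E]
    [Module K E] {e f : E} (h : (2 : K)⁻¹ • (e + f) = e) : f = e := by
  refine add_left_cancel (a := e) ?_
  calc e + f = (2 : K) • (2 : K)⁻¹ • (e + f) := by
        rw [smul_smul, mul_inv_cancel₀ two_ne_zero, one_smul]
    _ = e + e := by rw [h, two_smul]

section QuantumWalk

variable {H : Type*} [NormedAddCommGroup H] [InnerProductSpace ℂ H] [CompleteSpace H]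

/-- The paper's `T = X + iσY`, with `X = (V + V*)/2` and `Y = (V - V*)/(2i)`. -/
noncomputable def qwT (σ V : H →L[ℂ] H) : H →L[ℂ] H :=
  (2 : ℂ)⁻¹ • (V + adjoint V) + Complex.I • (σ ∘L ((2 * Complex.I)⁻¹ • (V - adjoint V)))

lemma qwT_apply_of_eigen {σ V : H →L[ℂ] H} (hσV : Commute σ V) (hσ : adjoint σ = σ) {c : ℂ}
    {u : H} (hu : σ u = c • u) :
    qwT σ V u = (2 : ℂ)⁻¹ • (V u + adjoint V u) + (c / 2) • (V u - adjoint V u) := by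
  have hσV' : Commute σ (adjoint V) := by
    simpa only [star_eq_adjoint, hσ] using hσV.star_star
  simp only [qwT, add_apply, smul_apply, comp_apply, sub_apply, map_smul, map_sub,
    hσV.apply_eq_smul hu, hσV'.apply_eq_smul hu, smul_smul, ← smul_sub]
  congr 2
  field_simp

lemma qwT_apply_of_eq_self {σ V : H →L[ℂ] H} (hσV : Commute σ V) (hσ : adjoint σ = σ) {u : H}
    (hu : σ u = (1 : ℂ) • u) : qwT σ V u = V u := by
  rw [qwT_apply_of_eigen hσV hσ hu]
  module

lemma qwT_apply_of_eq_neg {σ V : H →L[ℂ] H} (hσV : Commute σ V) (hσ : adjoint σ = σ) {u : H}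
    (hu : σ u = (-1 : ℂ) • u) : qwT σ V u = adjoint V u := by
  rw [qwT_apply_of_eigen hσV hσ hu]
  module

lemma adjoint_units_zpow {V : (H →L[ℂ] H)ˣ} (hV : adjoint (V : H →L[ℂ] H) = ↑V⁻¹) (n : ℤ) :
    adjoint ((V ^ n : (H →L[ℂ] H)ˣ) : H →L[ℂ] H) = ↑(V ^ (-n)) := by
  have hstar : star V = V⁻¹ := Units.ext hV
  rw [← star_eq_adjoint, ← Units.coe_star, star_zpow, hstar, inv_zpow']

lemma inner_units_zpow_smul_self_eq_ite {V : (H →L[ℂ] H)ˣ}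
    (hV : adjoint (V : H →L[ℂ] H) = ↑V⁻¹) {e : H} (he : ‖e‖ = 1)
    (horth : ∀ m : ℕ, 0 < m → (inner ℂ (((V : H →L[ℂ] H) ^ m) e) e : ℂ) = 0) (n : ℤ) :
    (inner ℂ (V ^ n • e) e : ℂ) = if n = 0 then 1 else 0 := by
  have hnat (m : ℕ) : ((V ^ (m : ℤ) : (H →L[ℂ] H)ˣ) : H →L[ℂ] H) = (V : H →L[ℂ] H) ^ m := by
    rw [zpow_natCast, Units.val_pow_eq_pow_val]
  split_ifs with hn
  · rw [hn, zpow_zero, one_smul, inner_self_eq_norm_sq_to_K, he]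
    norm_num
  obtain ⟨m, rfl | rfl⟩ := n.eq_nat_or_neg
  · rw [Units.smul_def, ContinuousLinearMap.smul_def, hnat]
    exact horth m (by omega)
  · rw [Units.smul_def, ContinuousLinearMap.smul_def, ← adjoint_inner_right,
      adjoint_units_zpow hV, neg_neg, hnat, ← inner_conj_symm, horth m (by omega), map_zero]

variable {V : (H →L[ℂ] H)ˣ} {W : H →L[ℂ] H} {e : H} {e1 e2 : ℤ → H}

lemma qwT_zpow_smul_of_eq_self {σ : H →L[ℂ] H} {T : (H →L[ℂ] H)ˣ} (hσ : adjoint σ = σ)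
    (hσV : Commute σ V) (hT : (T : H →L[ℂ] H) = qwT σ V) {u : H} (hu : σ u = u) (n : ℤ) :
    T ^ n • u = V ^ n • u :=
  units_zpow_smul_eq_of_eigen hσV (fun w hw => by
    rw [Units.smul_def, hT, ContinuousLinearMap.smul_def, qwT_apply_of_eq_self hσV hσ hw]; rfl)
    (by rw [one_smul, hu]) n

lemma qwT_zpow_smul_of_eq_neg {σ : H →L[ℂ] H} {T : (H →L[ℂ] H)ˣ}
    (hV : adjoint (V : H →L[ℂ] H) = ↑V⁻¹) (hσ : adjoint σ = σ) (hσV : Commute σ V)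
    (hT : (T : H →L[ℂ] H) = qwT σ V) {u : H} (hu : σ u = -u) (n : ℤ) :
    T ^ n • u = V ^ (-n) • u := by
  rw [← inv_zpow']
  exact units_zpow_smul_eq_of_eigen hσV.units_inv_right (fun w hw => by
    rw [Units.smul_def, hT, ContinuousLinearMap.smul_def, qwT_apply_of_eq_neg hσV hσ hw, hV]; rfl)
    (by rw [neg_one_smul, hu]) n

lemma adjoint_apply_e1 (hV : adjoint (V : H →L[ℂ] H) = ↑V⁻¹) (he1 : ∀ x, e1 x = V ^ x • e)
    (x : ℤ) : adjoint (V : H →L[ℂ] H) (e1 x) = e1 (x - 1) := by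
  rw [he1, he1, hV]
  change V⁻¹ • V ^ x • e = _
  rw [smul_smul]
  group

lemma adjoint_apply_e2 (hV : adjoint (V : H →L[ℂ] H) = ↑V⁻¹)
    (he2 : ∀ x, e2 x = V ^ (-x) • V • W e) (x : ℤ) :
    adjoint (V : H →L[ℂ] H) (e2 x) = e2 (x + 1) := by
  rw [he2, he2, hV]
  change V⁻¹ • V ^ (-x) • V • W e = _
  rw [smul_smul]
  group

lemma inner_e1_walk_apply (hV : adjoint (V : H →L[ℂ] H) = ↑V⁻¹) (hW : adjoint W = -W)
    (hVW : (V : H →L[ℂ] H) * W = W * ↑V⁻¹) (he1 : ∀ x, e1 x = V ^ x • e)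
    (he2 : ∀ x, e2 x = V ^ (-x) • V • W e) (s t : ℝ) (x : ℤ) (φ : H) :
    inner ℂ (e1 x) (((s : ℂ) • (V : H →L[ℂ] H) + (t : ℂ) • W) φ) =
      s * inner ℂ (e1 (x - 1)) φ - t * inner ℂ (e2 (x + 1)) φ := by
  rw [add_apply, smul_apply, smul_apply, inner_add_right, inner_smul_right, inner_smul_right,
    ← adjoint_inner_left, ← adjoint_inner_left W, adjoint_apply_e1 hV he1, hW, neg_apply,
    apply_e1 hVW he1 he2, inner_neg_left]
  ring

lemma inner_e2_walk_apply (hV : adjoint (V : H →L[ℂ] H) = ↑V⁻¹) (hW : adjoint W = -W)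
    (hVW : (V : H →L[ℂ] H) * W = W * ↑V⁻¹) (hWe : W (W e) = -e) (he1 : ∀ x, e1 x = V ^ x • e)
    (he2 : ∀ x, e2 x = V ^ (-x) • V • W e) (s t : ℝ) (x : ℤ) (φ : H) :
    inner ℂ (e2 x) (((s : ℂ) • (V : H →L[ℂ] H) + (t : ℂ) • W) φ) =
      t * inner ℂ (e1 (x - 1)) φ + s * inner ℂ (e2 (x + 1)) φ := by
  rw [add_apply, smul_apply, smul_apply, inner_add_right, inner_smul_right, inner_smul_right,
    ← adjoint_inner_left, ← adjoint_inner_left W, adjoint_apply_e2 hV he2, hW, neg_apply,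
    apply_e2 hVW hWe he1 he2, neg_neg, add_comm]

lemma isWalk_inner (hV : adjoint (V : H →L[ℂ] H) = ↑V⁻¹) (hW : adjoint W = -W)
    (hVW : (V : H →L[ℂ] H) * W = W * ↑V⁻¹) (hWe : W (W e) = -e) (he1 : ∀ x, e1 x = V ^ x • e)
    (he2 : ∀ x, e2 x = V ^ (-x) • V • W e) (s t : ℝ) (Ψ : H) :
    IsWalk s t (fun n x => inner ℂ (e1 x) ((((s : ℂ) • (V : H →L[ℂ] H) + (t : ℂ) • W) ^ n) Ψ))
      (fun n x => inner ℂ (e2 x) ((((s : ℂ) • (V : H →L[ℂ] H) + (t : ℂ) • W) ^ n) Ψ)) := by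
  intro n x
  simp only [pow_succ', mul_apply_eq_comp]
  exact ⟨inner_e1_walk_apply hV hW hVW he1 he2 s t x _,
    inner_e2_walk_apply hV hW hVW hWe he1 he2 s t x _⟩

lemma inner_units_smul_smul (hV : adjoint (V : H →L[ℂ] H) = ↑V⁻¹) (a b : H) :
    inner ℂ (V • a) (V • b) = inner ℂ a b := by
  change inner ℂ ((V : H →L[ℂ] H) a) ((V : H →L[ℂ] H) b) = _
  rw [← adjoint_inner_right, hV]
  exact congrArg (inner ℂ a) (inv_smul_smul V b)

lemma inner_apply_apply_of_adjoint_eq_neg (hW : adjoint W = -W) (hWW : W * W = -1) (a b : H) :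
    inner ℂ (W a) (W b) = inner ℂ a b := by
  rw [← adjoint_inner_right, hW, neg_apply, show W (W b) = -b from congr($hWW b), neg_neg]

lemma inner_eq_zero_of_eigen {σ : H →L[ℂ] H} (hσ : adjoint σ = σ) {a b : H} (ha : σ a = a)
    (hb : σ b = -b) : inner ℂ a b = 0 := by
  refine self_eq_neg.mp ?_
  calc inner ℂ a b = inner ℂ (σ a) b := by rw [ha]
    _ = inner ℂ a (σ b) := by rw [← adjoint_inner_right, hσ]
    _ = -inner ℂ a b := by rw [hb, inner_neg_right]

lemma inner_initial_eq_ite {σ : H →L[ℂ] H} (hV : adjoint (V : H →L[ℂ] H) = ↑V⁻¹)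
    (hW : adjoint W = -W) (hVW : (V : H →L[ℂ] H) * W = W * ↑V⁻¹) (hWW : W * W = -1)
    (hσ : adjoint σ = σ) (hσV : Commute σ V) (hσe : σ e = e) (hσf : σ (V • W e) = -(V • W e))
    (he : ‖e‖ = 1) (horth : ∀ m : ℕ, 0 < m → (inner ℂ (((V : H →L[ℂ] H) ^ m) e) e : ℂ) = 0)
    (he1 : ∀ x, e1 x = V ^ x • e) (he2 : ∀ x, e2 x = V ^ (-x) • V • W e) (ψ₁ ψ₂ : ℂ) (x : ℤ) :
    inner ℂ (e1 x) (ψ₁ • e1 0 + ψ₂ • e2 0) = (if x = 0 then ψ₁ else 0) ∧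
      inner ℂ (e2 x) (ψ₁ • e1 0 + ψ₂ • e2 0) = if x = 0 then ψ₂ else 0 := by
  have hσe1 (y : ℤ) : σ (e1 y) = e1 y := by rw [he1, apply_units_zpow_smul_of_commute hσV, hσe]
  have hσe2 (y : ℤ) : σ (e2 y) = -e2 y := by
    rw [he2, apply_units_zpow_smul_of_commute hσV, hσf, smul_neg]
  have he1e1 : inner ℂ (e1 x) (e1 0) = if x = 0 then 1 else 0 := by
    rw [he1, he1, zpow_zero, one_smul, inner_units_zpow_smul_self_eq_ite hV he horth]
  have he2e2 : inner ℂ (e2 x) (e2 0) = if x = 0 then 1 else 0 := by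
    rw [he2, he2, neg_zero, zpow_zero, one_smul, smul_smul, ← (Commute.self_zpow V (-x)).eq,
      ← smul_smul, ← apply_units_zpow_smul hVW, inner_units_smul_smul hV,
      inner_apply_apply_of_adjoint_eq_neg hW hWW, inner_units_zpow_smul_self_eq_ite hV he horth]
  have he1e2 : inner ℂ (e1 x) (e2 0) = 0 := inner_eq_zero_of_eigen hσ (hσe1 x) (hσe2 0)
  have he2e1 : inner ℂ (e2 x) (e1 0) = 0 :=
    inner_eq_zero_symm.mp (inner_eq_zero_of_eigen hσ (hσe1 0) (hσe2 x))
  simp only [inner_add_right, inner_smul_right, he1e1, he2e2, he1e2, he2e1]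
  constructor <;> split_ifs <;> ring

end QuantumWalk

theorem qw_characteristic_function_general
    {H : Type*} [NormedAddCommGroup H] [InnerProductSpace ℂ H] [CompleteSpace H]
    (V W σ X Y T Pp ε : H →L[ℂ] H)
    (hVu : adjoint V ∘L V = 1 ∧ V ∘L adjoint V = 1)
    (hWu : adjoint W ∘L W = 1 ∧ W ∘L adjoint W = 1)
    (hQW1 : W ∘L W = -1)
    (hQW2 : V ∘L W = W ∘L adjoint V)
    (hQW3W : σ ∘L W + W ∘L σ = 0)
    (hQW3V : σ ∘L V - V ∘L σ = 0)
    (hQW4 : adjoint σ = σ)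
    (hX : X = (2 : ℂ)⁻¹ • (V + adjoint V))
    (hY : Y = (2 * Complex.I)⁻¹ • (V - adjoint V))
    (hT : T = X + Complex.I • (σ ∘L Y))
    (hPp : Pp = (2 : ℂ)⁻¹ • (1 + σ))
    (hε : ε = V ∘L W)
    (e : H) (he : ‖e‖ = 1) (hePp : Pp e = e)
    (horth : ∀ m : ℕ, 0 < m → (inner ℂ ((V ^ m) e) e : ℂ) = 0)
    (Tu : (H →L[ℂ] H)ˣ) (hTu : (Tu : H →L[ℂ] H) = T)
    (e1 e2 : ℤ → H)
    (he1 : ∀ x : ℤ, e1 x = ((Tu ^ x : (H →L[ℂ] H)ˣ) : H →L[ℂ] H) e)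
    (he2 : ∀ x : ℤ, e2 x = ((Tu ^ x : (H →L[ℂ] H)ˣ) : H →L[ℂ] H) (ε e))
    (s t : ℝ)
    (hst : s ^ 2 + t ^ 2 = 1)
    (U : H →L[ℂ] H) (hU : U = (s : ℂ) • V + (t : ℂ) • W)
    (ψ₁ ψ₂ : ℂ)
    (Ψ : H) (hΨ : Ψ = ψ₁ • e1 0 + ψ₂ • e2 0)
    (q : ℕ → ℤ → ℝ)
    (hq : ∀ n x, q n x =
      ‖(inner ℂ (e1 x) ((U ^ n) Ψ) : ℂ)‖ ^ 2 + ‖(inner ℂ (e2 x) ((U ^ n) Ψ) : ℂ)‖ ^ 2) :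
    ∀ (n : ℕ) (ξ : ℝ),
      (∑' x : ℤ, ((q n x : ℝ) : ℂ) * Complex.exp (Complex.I * ξ * x)) =
        ((‖ψ₁‖ ^ 2 : ℝ) : ℂ) * (sqSum (pn1 s n) ξ + sqSum (pn2 s t n) ξ) +
          ((‖ψ₂‖ ^ 2 : ℝ) : ℂ) * (sqSum (qn1 s t n) ξ + sqSum (qn2 s n) ξ) +
          ((2 * (ψ₁ * (starRingEnd ℂ) ψ₂).re : ℝ) : ℂ) *
            (prodSum (pn1 s n) (qn1 s t n) ξ + prodSum (pn2 s t n) (qn2 s n) ξ) := by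
  intro n ξ
  subst hU hΨ hT hX hY hPp hε
  let Vu : (H →L[ℂ] H)ˣ := ⟨V, adjoint V, hVu.2, hVu.1⟩
  have hV : adjoint (Vu : H →L[ℂ] H) = ↑Vu⁻¹ := rfl
  have hW : adjoint W = -W := eq_neg_of_mul_eq_one_of_mul_self_eq_neg_one hWu.1 hQW1
  have hσV : Commute σ V := sub_eq_zero.mp hQW3V
  have hσe : σ e = e := eq_of_inv_two_smul_add_eq (f := σ e) hePp
  have hσf : σ (V (W e)) = -V (W e) := by
    rw [hσV.apply_comm,
      show σ (W e) = -W (σ e) from congr($(eq_neg_of_add_eq_zero_left hQW3W) e), hσe, map_neg]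
  have he1' (x : ℤ) : e1 x = Vu ^ x • e :=
    (he1 x).trans (qwT_zpow_smul_of_eq_self hQW4 hσV hTu hσe x)
  have he2' (x : ℤ) : e2 x = Vu ^ (-x) • Vu • W e :=
    (he2 x).trans (qwT_zpow_smul_of_eq_neg hV hQW4 hσV hTu hσf x)
  have hinit := inner_initial_eq_ite hV hW hQW2 hQW1 hQW4 hσV hσe hσf he horth he1' he2' ψ₁ ψ₂
  have hwalk := isWalk_inner hV hW hQW2 congr($hQW1 e) he1' he2' s t (ψ₁ • e1 0 + ψ₂ • e2 0)
  have hamp := hwalk.eq_coeff hst (fun x => by simpa using (hinit x).1)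
    (fun x => by simpa using (hinit x).2) n
  calc _ = ∑' x : ℤ, ((‖ψ₁ * (pn1 s n).coeff x + ψ₂ * (qn1 s t n).coeff x‖ ^ 2 +
        ‖ψ₁ * (pn2 s t n).coeff x + ψ₂ * (qn2 s n).coeff x‖ ^ 2 : ℝ) : ℂ) *
          Complex.exp (Complex.I * ξ * x) :=
        tsum_congr fun x => by rw [hq, (hamp x).1, (hamp x).2]
    _ = _ := tsum_norm_sq_mul_exp ψ₁ ψ₂ (fun x => (conj_coeff_pn hst n x).1)
        (fun x => (conj_coeff_pn hst n x).2) (fun x => (conj_coeff_qn hst n x).1)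
        (fun x => (conj_coeff_qn hst n x).2) ξ

/-- The characteristic function `E_n(ξ) = Σ_x q_n(ψ;x) e^{iξx}` equals
`|ψ₁|²[P_n¹ + P_n²] + |ψ₂|²[Q_n¹ + Q_n²] + 2Re(ψ₁ψ̄₂)[R_n¹ + R_n²]`. -/
theorem qw_characteristic_function
    {H : Type*} [NormedAddCommGroup H] [InnerProductSpace ℂ H] [CompleteSpace H]
    (V W σ X Y T Pp Pm ε : H →L[ℂ] H)
    (hVu : adjoint V ∘L V = 1 ∧ V ∘L adjoint V = 1)
    (hWu : adjoint W ∘L W = 1 ∧ W ∘L adjoint W = 1)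
    (hσu : adjoint σ ∘L σ = 1 ∧ σ ∘L adjoint σ = 1)
    (hQW1 : W ∘L W = -1)
    (hQW2 : V ∘L W = W ∘L adjoint V)
    (hQW3W : σ ∘L W + W ∘L σ = 0)
    (hQW3V : σ ∘L V - V ∘L σ = 0)
    (hQW4 : adjoint σ = σ)
    (hX : X = (2 : ℂ)⁻¹ • (V + adjoint V))
    (hY : Y = (2 * Complex.I)⁻¹ • (V - adjoint V))
    (hT : T = X + Complex.I • (σ ∘L Y))
    (hPp : Pp = (2 : ℂ)⁻¹ • (1 + σ))
    (hPm : Pm = (2 : ℂ)⁻¹ • (1 - σ))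
    (hε : ε = V ∘L W)
    (e : H) (he : ‖e‖ = 1) (hePp : Pp e = e)
    (horth : ∀ m : ℕ, 0 < m → (inner ℂ ((V ^ m) e) e : ℂ) = 0)
    (Tu : (H →L[ℂ] H)ˣ) (hTu : (Tu : H →L[ℂ] H) = T)
    (e1 e2 : ℤ → H)
    (he1 : ∀ x : ℤ, e1 x = ((Tu ^ x : (H →L[ℂ] H)ˣ) : H →L[ℂ] H) e)
    (he2 : ∀ x : ℤ, e2 x = ((Tu ^ x : (H →L[ℂ] H)ˣ) : H →L[ℂ] H) (ε e))
    (s t : ℝ) (hs0 : 0 < s) (hs1 : s < 1) (ht0 : 0 < t) (ht1 : t < 1)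
    (hst : s ^ 2 + t ^ 2 = 1)
    (U : H →L[ℂ] H) (hU : U = (s : ℂ) • V + (t : ℂ) • W)
    (ψ₁ ψ₂ : ℂ) (hψ : ‖ψ₁‖ ^ 2 + ‖ψ₂‖ ^ 2 = 1)
    (Ψ : H) (hΨ : Ψ = ψ₁ • e1 0 + ψ₂ • e2 0)
    (q : ℕ → ℤ → ℝ)
    (hq : ∀ n x, q n x =
      ‖(inner ℂ (e1 x) ((U ^ n) Ψ) : ℂ)‖ ^ 2 + ‖(inner ℂ (e2 x) ((U ^ n) Ψ) : ℂ)‖ ^ 2) :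
    ∀ (n : ℕ) (ξ : ℝ),
      (∑' x : ℤ, ((q n x : ℝ) : ℂ) * Complex.exp (Complex.I * ξ * x)) =
        ((‖ψ₁‖ ^ 2 : ℝ) : ℂ) * (sqSum (pn1 s n) ξ + sqSum (pn2 s t n) ξ) +
          ((‖ψ₂‖ ^ 2 : ℝ) : ℂ) * (sqSum (qn1 s t n) ξ + sqSum (qn2 s n) ξ) +
          ((2 * (ψ₁ * (starRingEnd ℂ) ψ₂).re : ℝ) : ℂ) *
            (prodSum (pn1 s n) (qn1 s t n) ξ + prodSum (pn2 s t n) (qn2 s n) ξ) :=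
  qw_characteristic_function_general V W σ X Y T Pp ε hVu hWu hQW1 hQW2 hQW3W hQW3V hQW4 hX hY hT
    hPp hε e he hePp horth Tu hTu e1 e2 he1 he2 s t hst U hU ψ₁ ψ₂ Ψ hΨ q hq
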